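/- Let α ∈ (1, 3/2) and u be a 1-periodic C¹ function on [0,1)² with [u]_α := sup_{x≠y} |u(y) - u(x) - ∂1u(x)(y1 - x1)| / d(x,y)^α < ∞. Then ∂1 u satisfies the anisotropic Hölder bound [∂1 u]_{α-1} ≤ C [u]_α, i.e., |∂1u(x) - ∂1u(y)| ≤ C [u]_α d(x,y)^(α-1) for all x, y, with C depending only on α. -/
import Mathlib


/-- The anisotropic distance `d(x,y) = |x₁ - y₁| + |x₂ - y₂|^(2/3)` on `ℝ²`. -/
noncomputable def anisoDist (x y : ℝ × ℝ) : ℝ :=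
  |x.1 - y.1| + |x.2 - y.2| ^ ((2 : ℝ) / 3)

/-- Partial derivative in the first variable. -/
noncomputable def pd1 (u : ℝ × ℝ → ℝ) : ℝ × ℝ → ℝ :=
  fun x => deriv (fun t : ℝ => u (t, x.2)) x.1

/-- If `α ∈ (1, 3/2)` and `u` is a 1-periodic C¹ function with anisotropic
Hölder seminorm `[u]_α ≤ M` (in the second-order sense using the first-order
Taylor expansion in `x₁`), then `∂₁u` is anisotropically `(α-1)`-Hölder:
`|∂₁u(x) - ∂₁u(y)| ≤ C·M·d(x,y)^(α-1)`, with `C = C(α)`. -/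
theorem pd1_hoelder_bound :
    ∀ α : ℝ, 1 < α → α < 3 / 2 →
      ∃ C : ℝ, 0 < C ∧ ∀ (u : ℝ × ℝ → ℝ) (M : ℝ), 0 ≤ M →
        (∀ x : ℝ × ℝ, u (x.1 + 1, x.2) = u x) →
        (∀ x : ℝ × ℝ, u (x.1, x.2 + 1) = u x) →
        (∀ x : ℝ × ℝ, DifferentiableAt ℝ (fun t : ℝ => u (t, x.2)) x.1) →
        (∀ x y : ℝ × ℝ,
          |u y - u x - pd1 u x * (y.1 - x.1)| ≤ M * anisoDist x y ^ α) →
        ∀ x y : ℝ × ℝ,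
          |pd1 u x - pd1 u y| ≤ C * M * anisoDist x y ^ (α - 1) := by
  intro α hα1 hα2
  have hαm1 : (0:ℝ) < α - 1 := by linarith
  refine ⟨2 ^ α * 2 + 4, by positivity, ?_⟩
  intro u M hM _ _ _ hyp x y
  set p := pd1 u with hp
  -- symmetrized inequality
  have key : ∀ a b : ℝ × ℝ, |(p a - p b) * (b.1 - a.1)| ≤ 2 * M * anisoDist a b ^ α := by
    intro a b
    have h1 := hyp a b
    have h2 := hyp b a
    have hsym : anisoDist b a = anisoDist a b := by
      unfold anisoDist; rw [abs_sub_comm b.1, abs_sub_comm b.2]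
    rw [hsym] at h2
    have heq : (p a - p b) * (b.1 - a.1) =
        -((u b - u a - p a * (b.1 - a.1)) + (u a - u b - p b * (a.1 - b.1))) := by ring
    rw [heq, abs_neg]
    calc |(u b - u a - p a * (b.1 - a.1)) + (u a - u b - p b * (a.1 - b.1))|
        ≤ |u b - u a - p a * (b.1 - a.1)| + |u a - u b - p b * (a.1 - b.1)| := abs_add_le _ _
      _ ≤ M * anisoDist a b ^ α + M * anisoDist a b ^ α := add_le_add h1 h2
      _ = 2 * M * anisoDist a b ^ α := by ring
  -- step 1 : equal second coordinates
  have step1 : ∀ a b : ℝ × ℝ, a.2 = b.2 → |p a - p b| ≤ 2 * M * |a.1 - b.1| ^ (α - 1) := by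
    intro a b h2eq
    rcases eq_or_ne a.1 b.1 with h1eq | h1ne
    · have hab : a = b := Prod.ext h1eq h2eq
      rw [hab, sub_self, abs_zero]
      positivity
    · have hpos : 0 < |a.1 - b.1| := abs_pos.mpr (sub_ne_zero.mpr h1ne)
      have hd : anisoDist a b = |a.1 - b.1| := by
        unfold anisoDist
        rw [h2eq, sub_self, abs_zero, Real.zero_rpow (by norm_num : (2:ℝ)/3 ≠ 0), add_zero]
      have hk := key a b
      rw [hd, abs_mul, abs_sub_comm b.1 a.1] at hk
      have hpow : |a.1 - b.1| ^ α = |a.1 - b.1| ^ (α - 1) * |a.1 - b.1| := by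
        rw [← Real.rpow_add_one (ne_of_gt hpos)]
        norm_num
      rw [hpow, ← mul_assoc] at hk
      exact le_of_mul_le_mul_right hk hpos
  -- step 2 : equal first coordinates
  have step2 : ∀ a b c : ℝ, |p (a, b) - p (a, c)| ≤
      (2 ^ α * 2 + 2) * M * (|b - c| ^ ((2:ℝ)/3)) ^ (α - 1) := by
    intro a b c
    rcases eq_or_ne b c with rfl | hbc
    · rw [sub_self, abs_zero]
      positivity
    · set t := |b - c| with ht
      have htpos : 0 < t := abs_pos.mpr (sub_ne_zero.mpr hbc)
      set h := t ^ ((2:ℝ)/3) with hh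
      have hhpos : 0 < h := Real.rpow_pos_of_pos htpos _
      have hd : anisoDist (a, b) (a + h, c) = 2 * h := by
        unfold anisoDist
        have h1 : a - (a + h) = -h := by ring
        simp only [h1, abs_neg, abs_of_pos hhpos, ← ht, ← hh]
        ring
      have hk := key (a, b) (a + h, c)
      have hc1 : ((a + h, c) : ℝ × ℝ).1 - ((a, b) : ℝ × ℝ).1 = h := by simp
      rw [hd, hc1, abs_mul, abs_of_pos hhpos] at hk
      have hpow : (2 * h) ^ α = 2 ^ α * (h ^ (α - 1) * h) := by
        rw [Real.mul_rpow (by norm_num) (le_of_lt hhpos),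
          ← Real.rpow_add_one (ne_of_gt hhpos)]
        norm_num
      rw [hpow] at hk
      have hA : |p (a, b) - p (a + h, c)| ≤ 2 ^ α * 2 * M * h ^ (α - 1) := by
        refine le_of_mul_le_mul_right ?_ hhpos
        calc |p (a, b) - p (a + h, c)| * h ≤ 2 * M * (2 ^ α * (h ^ (α - 1) * h)) := hk
          _ = 2 ^ α * 2 * M * h ^ (α - 1) * h := by ring
      have hB : |p (a + h, c) - p (a, c)| ≤ 2 * M * h ^ (α - 1) := by
        have := step1 (a + h, c) (a, c) rfl
        simpa [abs_of_pos hhpos] using this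
      calc |p (a, b) - p (a, c)|
          ≤ |p (a, b) - p (a + h, c)| + |p (a + h, c) - p (a, c)| := abs_sub_le _ _ _
        _ ≤ 2 ^ α * 2 * M * h ^ (α - 1) + 2 * M * h ^ (α - 1) := add_le_add hA hB
        _ = (2 ^ α * 2 + 2) * M * h ^ (α - 1) := by ring
  -- assembly
  have hd1 : |x.1 - y.1| ≤ anisoDist x y := by
    unfold anisoDist
    exact le_add_of_nonneg_right (Real.rpow_nonneg (abs_nonneg _) _)
  have hd2 : |x.2 - y.2| ^ ((2:ℝ)/3) ≤ anisoDist x y := by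
    unfold anisoDist
    exact le_add_of_nonneg_left (abs_nonneg _)
  have hxy1 : |p x - p (y.1, x.2)| ≤ 2 * M * anisoDist x y ^ (α - 1) := by
    refine (step1 x (y.1, x.2) rfl).trans ?_
    gcongr
  have hxy2 : |p (y.1, x.2) - p y| ≤ (2 ^ α * 2 + 2) * M * anisoDist x y ^ (α - 1) := by
    have h := step2 y.1 x.2 y.2
    rw [Prod.mk.eta] at h
    refine h.trans ?_
    gcongr
  calc |p x - p y| ≤ |p x - p (y.1, x.2)| + |p (y.1, x.2) - p y| := abs_sub_le _ _ _
    _ ≤ 2 * M * anisoDist x y ^ (α - 1) + (2 ^ α * 2 + 2) * M * anisoDist x y ^ (α - 1) :=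
        add_le_add hxy1 hxy2
    _ = (2 ^ α * 2 + 4) * M * anisoDist x y ^ (α - 1) := by ring
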